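/- GAN (Jensen–Shannon) variational identity: Let μ be a σ-finite measure on a measurable space Z, and let p, q be probability densities with respect to μ with p(z) > 0 and q(z) > 0 for μ-a.e. z. Let f(x) = x log x − (x+1) log((1+x)/2) for x > 0 and define D_f(q‖p) = ∫ f(q/p) p dμ, assumed finite. Then D_f(q‖p) = sup_D { ∫ (log D) q dμ + ∫ (log(1−D)) p dμ } + log 4, where the supremum is over all measurable functions D : Z → (0,1), and the supremum is attained at D* = q/(p+q). -/

import Mathlib

/-!
For `a, b > 0` the function `d ↦ b log d + a log (1 - d)` on `(0, 1)` is maximised at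
`d = b / (a + b)` (Gibbs' inequality, i.e. `log x ≤ x - 1` applied to both terms), and its maximum
equals `a f(b / a) - (a + b) log 2`. With `a = p z`, `b = q z` this says pointwise that every
discriminator scores at most `D* = q / (p + q)`, whose score integrates to
`D_f(q‖p) - log 2 (∫ p + ∫ q) = D_f(q‖p) - log 4`. Both parts of the optimal score are
nonpositive and their sum differs from `f(q/p) p` by the integrable `(p + q) log 2`, so each part
is integrable.
-/

open MeasureTheory Real Set

noncomputable def jsGenerator (x : ℝ) : ℝ := x * log x - (x + 1) * log ((1 + x) / 2)

lemma div_add_mem_Ioo {a b : ℝ} (ha : 0 < a) (hb : 0 < b) : b / (a + b) ∈ Ioo (0 : ℝ) 1 :=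
  ⟨by positivity, (div_lt_one (by positivity)).2 (by linarith)⟩

lemma one_sub_div_add {a b : ℝ} (ha : 0 < a) (hb : 0 < b) : 1 - b / (a + b) = a / (a + b) := by
  field_simp
  ring

lemma mul_log_div_le_sub {u v : ℝ} (hu : 0 < u) (hv : 0 < v) : v * log (u / v) ≤ u - v :=
  calc v * log (u / v) ≤ v * (u / v - 1) := by gcongr; exact log_le_sub_one_of_pos (by positivity)
    _ = u - v := by field_simp

lemma log_mul_add_log_one_sub_mul_le {a b d : ℝ} (ha : 0 < a) (hb : 0 < b)
    (hd : d ∈ Ioo (0 : ℝ) 1) :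
    log d * b + log (1 - d) * a ≤ log (b / (a + b)) * b + log (1 - b / (a + b)) * a := by
  obtain ⟨hd0, hd1⟩ := hd
  have hab : 0 < a + b := by linarith
  have hd1' : 0 < 1 - d := by linarith
  have gibbs_b := mul_log_div_le_sub (mul_pos hd0 hab) hb
  have gibbs_a := mul_log_div_le_sub (mul_pos hd1' hab) ha
  rw [← div_div_eq_mul_div, log_div hd0.ne' (div_pos hb hab).ne'] at gibbs_b
  rw [← div_div_eq_mul_div, log_div hd1'.ne' (div_pos ha hab).ne'] at gibbs_a
  rw [one_sub_div_add ha hb]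
  linarith

lemma jsGenerator_div_mul {a b : ℝ} (ha : 0 < a) (hb : 0 < b) :
    jsGenerator (b / a) * a =
      log (b / (a + b)) * b + log (1 - b / (a + b)) * a + (a + b) * log 2 := by
  have hab : 0 < a + b := by linarith
  have hlog_ratio : log (b / a) = log (b / (a + b)) - log (a / (a + b)) := by
    rw [← log_div (by positivity) (by positivity)]
    congr 1
    field_simp
  have hlog_mean : log ((1 + b / a) / 2) = -log (a / (a + b)) - log 2 := by
    rw [← log_inv, ← log_div (by positivity) two_ne_zero]
    congr 1
    field_simp
  rw [jsGenerator, hlog_ratio, hlog_mean, one_sub_div_add ha hb]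
  field_simp
  ring

section Discriminator

variable {Z : Type*} {p q : Z → ℝ}

/-- Patched to `1 / 2` off `{0 < p ∧ 0 < q}`: admissible discriminators must take values in
`(0, 1)` everywhere, not just almost everywhere. -/
noncomputable def optimalDiscriminator (p q : Z → ℝ) (z : Z) : ℝ :=
  if 0 < p z ∧ 0 < q z then q z / (p z + q z) else 1 / 2

lemma optimalDiscriminator_mem_Ioo (z : Z) : optimalDiscriminator p q z ∈ Ioo (0 : ℝ) 1 := by
  unfold optimalDiscriminator
  split_ifs with h
  · exact div_add_mem_Ioo h.1 h.2
  · norm_num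

variable [MeasurableSpace Z]

def discriminatorValues (μ : Measure Z) (p q : Z → ℝ) : Set ℝ :=
  {y | ∃ D : Z → ℝ, Measurable D ∧ (∀ z, D z ∈ Ioo (0 : ℝ) 1) ∧
    Integrable (fun z ↦ log (D z) * q z) μ ∧ Integrable (fun z ↦ log (1 - D z) * p z) μ ∧
    y = ∫ z, log (D z) * q z ∂μ + ∫ z, log (1 - D z) * p z ∂μ}

variable {μ : Measure Z}

lemma measurable_optimalDiscriminator (hp : Measurable p) (hq : Measurable q) :
    Measurable (optimalDiscriminator p q) :=
  .ite ((measurableSet_lt measurable_const hp).inter (measurableSet_lt measurable_const hq))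
    (hq.div (hp.add hq)) measurable_const

lemma optimalDiscriminator_ae_eq (hppos : ∀ᵐ z ∂μ, 0 < p z) (hqpos : ∀ᵐ z ∂μ, 0 < q z) :
    optimalDiscriminator p q =ᵐ[μ] fun z ↦ q z / (p z + q z) := by
  filter_upwards [hppos, hqpos] with z hpz hqz
  exact if_pos ⟨hpz, hqz⟩

lemma jsGenerator_integrand_ae_eq (hppos : ∀ᵐ z ∂μ, 0 < p z) (hqpos : ∀ᵐ z ∂μ, 0 < q z)
    {f : ℝ → ℝ} (hf : ∀ x, 0 < x → f x = jsGenerator x) :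
    (fun z ↦ f (q z / p z) * p z) =ᵐ[μ] fun z ↦ log (q z / (p z + q z)) * q z +
      log (1 - q z / (p z + q z)) * p z + (p z + q z) * log 2 := by
  filter_upwards [hppos, hqpos] with z hpz hqz
  rw [hf _ (div_pos hqz hpz), jsGenerator_div_mul hpz hqz]

lemma integrable_optimal_scores (hp : Measurable p) (hq : Measurable q)
    (hppos : ∀ᵐ z ∂μ, 0 < p z) (hqpos : ∀ᵐ z ∂μ, 0 < q z)
    (hpInt : Integrable p μ) (hqInt : Integrable q μ)
    {f : ℝ → ℝ} (hf : ∀ x, 0 < x → f x = jsGenerator x)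
    (hDf : Integrable (fun z ↦ f (q z / p z) * p z) μ) :
    Integrable (fun z ↦ log (q z / (p z + q z)) * q z) μ ∧
      Integrable (fun z ↦ log (1 - q z / (p z + q z)) * p z) μ := by
  have hD : Measurable fun z ↦ q z / (p z + q z) := hq.div (hp.add hq)
  have hsum : Integrable (fun z ↦ log (q z / (p z + q z)) * q z +
      log (1 - q z / (p z + q z)) * p z) μ := by
    refine (hDf.sub ((hpInt.fun_add hqInt).mul_const (log 2))).congr ?_
    filter_upwards [jsGenerator_integrand_ae_eq hppos hqpos hf] with z hz
    simp only [Pi.sub_apply, hz]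
    ring
  have hnonpos : ∀ᵐ z ∂μ, log (q z / (p z + q z)) * q z ≤ 0 ∧
      log (1 - q z / (p z + q z)) * p z ≤ 0 := by
    filter_upwards [hppos, hqpos] with z hpz hqz
    obtain ⟨hD0, hD1⟩ := div_add_mem_Ioo hpz hqz
    exact ⟨mul_nonpos_of_nonpos_of_nonneg (log_nonpos hD0.le hD1.le) hqz.le,
      mul_nonpos_of_nonpos_of_nonneg (log_nonpos (by linarith) (by linarith)) hpz.le⟩
  exact (integrable_add_iff_of_nonpos (hD.log.mul hq).aestronglyMeasurable
    (hnonpos.mono fun _ h ↦ h.1) (hnonpos.mono fun _ h ↦ h.2)).1 hsum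

lemma integral_optimal_scores (hppos : ∀ᵐ z ∂μ, 0 < p z) (hqpos : ∀ᵐ z ∂μ, 0 < q z)
    (hpint : ∫ z, p z ∂μ = 1) (hqint : ∫ z, q z ∂μ = 1)
    {f : ℝ → ℝ} (hf : ∀ x, 0 < x → f x = jsGenerator x)
    (hg : Integrable (fun z ↦ log (q z / (p z + q z)) * q z) μ)
    (hh : Integrable (fun z ↦ log (1 - q z / (p z + q z)) * p z) μ) :
    ∫ z, log (q z / (p z + q z)) * q z ∂μ + ∫ z, log (1 - q z / (p z + q z)) * p z ∂μ =
      ∫ z, f (q z / p z) * p z ∂μ - log 4 := by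
  have hpInt : Integrable p μ := .of_integral_ne_zero (by simp [hpint])
  have hqInt : Integrable q μ := .of_integral_ne_zero (by simp [hqint])
  have hlog4 : log 4 = 2 * log 2 := by
    rw [show (4 : ℝ) = 2 ^ 2 by norm_num, log_pow, Nat.cast_ofNat]
  rw [integral_congr_ae (jsGenerator_integrand_ae_eq hppos hqpos hf),
    integral_add (hg.fun_add hh) ((hpInt.fun_add hqInt).mul_const _), integral_add hg hh,
    integral_mul_const, integral_add hpInt hqInt, hpint, hqint, hlog4]
  ring

lemma isGreatest_discriminatorValues (hp : Measurable p) (hq : Measurable q)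
    (hppos : ∀ᵐ z ∂μ, 0 < p z) (hqpos : ∀ᵐ z ∂μ, 0 < q z)
    (hg : Integrable (fun z ↦ log (q z / (p z + q z)) * q z) μ)
    (hh : Integrable (fun z ↦ log (1 - q z / (p z + q z)) * p z) μ) :
    IsGreatest (discriminatorValues μ p q)
      (∫ z, log (q z / (p z + q z)) * q z ∂μ + ∫ z, log (1 - q z / (p z + q z)) * p z ∂μ) := by
  have hD := optimalDiscriminator_ae_eq hppos hqpos
  have hDg : (fun z ↦ log (optimalDiscriminator p q z) * q z) =ᵐ[μ]
      fun z ↦ log (q z / (p z + q z)) * q z := by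
    filter_upwards [hD] with z hz
    rw [hz]
  have hDh : (fun z ↦ log (1 - optimalDiscriminator p q z) * p z) =ᵐ[μ]
      fun z ↦ log (1 - q z / (p z + q z)) * p z := by
    filter_upwards [hD] with z hz
    rw [hz]
  refine ⟨⟨optimalDiscriminator p q, measurable_optimalDiscriminator hp hq,
    optimalDiscriminator_mem_Ioo, hg.congr hDg.symm, hh.congr hDh.symm, ?_⟩, ?_⟩
  · rw [integral_congr_ae hDg, integral_congr_ae hDh]
  · rintro _ ⟨D, -, hDmem, hDg, hDh, rfl⟩
    rw [← integral_add hDg hDh, ← integral_add hg hh]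
    refine integral_mono_ae (hDg.fun_add hDh) (hg.fun_add hh) ?_
    filter_upwards [hppos, hqpos] with z hpz hqz
    exact log_mul_add_log_one_sub_mul_le hpz hqz (hDmem z)

end Discriminator

theorem js_gan_variational_identity_general
    {Z : Type} [MeasurableSpace Z] (μ : Measure Z)
    (p q : Z → ℝ) (hp : Measurable p) (hq : Measurable q)
    (hppos : ∀ᵐ z ∂μ, 0 < p z) (hqpos : ∀ᵐ z ∂μ, 0 < q z)
    (hpint : ∫ z, p z ∂μ = 1) (hqint : ∫ z, q z ∂μ = 1)
    (f : ℝ → ℝ)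
    (hf : ∀ x : ℝ, 0 < x → f x = x * Real.log x - (x + 1) * Real.log ((1 + x) / 2))
    (hDf : Integrable (fun z => f (q z / p z) * p z) μ) :
    (∫ z, f (q z / p z) * p z ∂μ =
      sSup {y : ℝ | ∃ D : Z → ℝ, Measurable D ∧ (∀ z, D z ∈ Set.Ioo (0 : ℝ) 1) ∧
        Integrable (fun z => Real.log (D z) * q z) μ ∧
        Integrable (fun z => Real.log (1 - D z) * p z) μ ∧
        y = ∫ z, Real.log (D z) * q z ∂μ + ∫ z, Real.log (1 - D z) * p z ∂μ}
      + Real.log 4) ∧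
    (∫ z, Real.log (q z / (p z + q z)) * q z ∂μ
        + ∫ z, Real.log (1 - q z / (p z + q z)) * p z ∂μ
      = ∫ z, f (q z / p z) * p z ∂μ - Real.log 4) := by
  have hpInt : Integrable p μ := .of_integral_ne_zero (by simp [hpint])
  have hqInt : Integrable q μ := .of_integral_ne_zero (by simp [hqint])
  obtain ⟨hg, hh⟩ := integrable_optimal_scores hp hq hppos hqpos hpInt hqInt hf hDf
  have hvalue := integral_optimal_scores hppos hqpos hpint hqint hf hg hh
  have hsup := (isGreatest_discriminatorValues hp hq hppos hqpos hg hh).csSup_eq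
  rw [discriminatorValues] at hsup
  exact ⟨by rw [hsup, hvalue]; ring, hvalue⟩

/-- GAN (Jensen–Shannon) variational identity: for positive probability densities `p, q`
w.r.t. a σ-finite `μ` and the Jensen–Shannon generator
`f(x) = x log x − (x+1) log((1+x)/2)` with finite divergence `D_f(q‖p) = ∫ f(q/p) p dμ`,
one has `D_f(q‖p) = sup_D { ∫ log(D) q dμ + ∫ log(1−D) p dμ } + log 4`, the supremum being
over measurable `D : Z → (0,1)` (with both integrals existing), attained at
`D* = q/(p+q)`. -/
theorem js_gan_variational_identity
    {Z : Type} [MeasurableSpace Z] (μ : Measure Z) [SigmaFinite μ]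
    (p q : Z → ℝ) (hp : Measurable p) (hq : Measurable q)
    (hppos : ∀ᵐ z ∂μ, 0 < p z) (hqpos : ∀ᵐ z ∂μ, 0 < q z)
    (hpint : ∫ z, p z ∂μ = 1) (hqint : ∫ z, q z ∂μ = 1)
    (f : ℝ → ℝ)
    (hf : ∀ x : ℝ, 0 < x → f x = x * Real.log x - (x + 1) * Real.log ((1 + x) / 2))
    (hDf : Integrable (fun z => f (q z / p z) * p z) μ) :
    (∫ z, f (q z / p z) * p z ∂μ =
      sSup {y : ℝ | ∃ D : Z → ℝ, Measurable D ∧ (∀ z, D z ∈ Set.Ioo (0 : ℝ) 1) ∧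
        Integrable (fun z => Real.log (D z) * q z) μ ∧
        Integrable (fun z => Real.log (1 - D z) * p z) μ ∧
        y = ∫ z, Real.log (D z) * q z ∂μ + ∫ z, Real.log (1 - D z) * p z ∂μ}
      + Real.log 4) ∧
    (∫ z, Real.log (q z / (p z + q z)) * q z ∂μ
        + ∫ z, Real.log (1 - q z / (p z + q z)) * p z ∂μ
      = ∫ z, f (q z / p z) * p z ∂μ - Real.log 4) :=
  js_gan_variational_identity_general μ p q hp hq hppos hqpos hpint hqint f hf hDf
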